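/- Let η ∈ L^∞(T) be nonnegative with ∥η∥_∞ = 1 and ∫_T log η dm > -∞, and let O_η be the associated outer function. Then O_η is G-extremal (∥O_η∥_G = 1) if and only if there exists a sequence {z_n} ⊂ D such that Pη(z_n) → 1 and P(log(1/η))(z_n) → ∞. -/

import Mathlib

open MeasureTheory Complex Real Filter Topology
open scoped ENNReal

/-- Normalized arc-length measure on the circle, parametrized by angle θ ∈ (0, 2π]. -/
noncomputable def circleM : Measure ℝ :=
  (ENNReal.ofReal (2 * Real.pi))⁻¹ • (volume.restrict (Set.Ioc 0 (2 * Real.pi)))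

/-- Poisson kernel (density of harmonic measure ω_z w.r.t. circleM) at the boundary
point with angle θ. -/
noncomputable def pk (z : ℂ) (θ : ℝ) : ℝ :=
  (1 - ‖z‖ ^ 2) / ‖Complex.exp (θ * Complex.I) - z‖ ^ 2

/-- Poisson integral of a complex boundary function. -/
noncomputable def poissonInt (f : ℝ → ℂ) (z : ℂ) : ℂ :=
  ∫ θ, (pk z θ : ℂ) * f θ ∂circleM

/-- Poisson integral of a real boundary function. -/
noncomputable def poissonIntR (u : ℝ → ℝ) (z : ℂ) : ℝ :=
  ∫ θ, pk z θ * u θ ∂circleM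

/-- Φ_f(z) = P(|f|²)(z) - |Pf(z)|². -/
noncomputable def Phi (f : ℝ → ℂ) (z : ℂ) : ℝ :=
  (∫ θ, pk z θ * ‖f θ‖ ^ 2 ∂circleM) - ‖poissonInt f z‖ ^ 2

/-- The open unit disk. -/
def unitDisk : Set ℂ := Metric.ball 0 1

/-- The Garsia norm ‖f‖_G = sup_{z ∈ 𝔻} Φ_f(z)^{1/2}, valued in ℝ≥0∞. -/
noncomputable def garsiaNorm (f : ℝ → ℂ) : ℝ≥0∞ :=
  ⨆ z : unitDisk, ENNReal.ofReal (Real.sqrt (Phi f (z : ℂ)))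


/-! ### Auxiliary lemmas -/

lemma twopi_pos : (0:ℝ) < 2 * π := by positivity

instance : IsProbabilityMeasure circleM := by
  constructor
  rw [circleM, Measure.smul_apply, Measure.restrict_apply_univ, Real.volume_Ioc, smul_eq_mul,
    sub_zero]
  exact ENNReal.inv_mul_cancel (ENNReal.ofReal_pos.mpr twopi_pos).ne' ENNReal.ofReal_ne_top

lemma integral_circleM (f : ℝ → ℝ) :
    ∫ θ, f θ ∂circleM = (2*π)⁻¹ * ∫ θ in (0:ℝ)..(2*π), f θ := by
  rw [circleM, integral_smul_measure, intervalIntegral.integral_of_le twopi_pos.le]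
  simp [ENNReal.toReal_inv, ENNReal.toReal_ofReal twopi_pos.le, Real.pi_pos.le]

lemma expθ_ne {z : ℂ} (hz : ‖z‖ < 1) (θ : ℝ) : Complex.exp (θ * I) - z ≠ 0 := by
  intro h
  have h2 : Complex.exp (θ * I) = z := by linear_combination h
  have h3 := Complex.norm_exp_ofReal_mul_I θ
  rw [h2] at h3
  rw [h3] at hz
  exact lt_irrefl _ hz

lemma pk_re (z : ℂ) (θ : ℝ) :
    pk z θ = ((Complex.exp (θ * I) + z) / (Complex.exp (θ * I) - z)).re := by
  set e := Complex.exp (θ * I) with he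
  have h1 : ‖e‖ = 1 := Complex.norm_exp_ofReal_mul_I θ
  have hns : Complex.normSq e = 1 := by
    rw [← Complex.sq_norm, h1]; norm_num
  rw [Complex.div_re]
  have hd : Complex.normSq (e - z) = ‖e - z‖ ^ 2 := (Complex.sq_norm _).symm
  rw [hd]
  have hnum : (e + z).re * (e - z).re + (e + z).im * (e - z).im
      = 1 - ‖z‖ ^ 2 := by
    have h5 := hns
    simp only [Complex.normSq_apply] at h5
    have hz2 : ‖z‖ ^ 2 = z.re * z.re + z.im * z.im := by
      rw [← Complex.normSq_apply, Complex.sq_norm]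
    simp only [Complex.add_re, Complex.sub_re, Complex.add_im, Complex.sub_im]
    nlinarith
  rw [pk, ← add_div, hnum]

lemma integral_exp_div {z : ℂ} (hz : ‖z‖ < 1) :
    ∫ θ in (0:ℝ)..(2*π), Complex.exp (θ * I) / (Complex.exp (θ * I) - z)
      = 2 * π := by
  have hz' : z ∈ Metric.ball (0:ℂ) 1 := by
    simpa [Metric.mem_ball, Complex.dist_eq] using hz
  have h := circleIntegral.integral_sub_inv_of_mem_ball hz'
  rw [circleIntegral] at h
  simp only [deriv_circleMap, circleMap, Complex.ofReal_one, zero_add, one_mul,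
    smul_eq_mul] at h
  have h2 : ∫ θ in (0:ℝ)..(2*π), Complex.exp (θ * I) * I * (Complex.exp (θ * I) - z)⁻¹
      = 2 * π * I := h
  have h3 : ∀ θ : ℝ, Complex.exp (θ * I) * I * (Complex.exp (θ * I) - z)⁻¹
      = I * (Complex.exp (θ * I) / (Complex.exp (θ * I) - z)) := by
    intro θ; ring
  simp only [h3] at h2
  rw [intervalIntegral.integral_const_mul] at h2
  exact mul_left_cancel₀ Complex.I_ne_zero (h2.trans (by ring))

lemma cont_exp_sub {z : ℂ} (hz : ‖z‖ < 1) :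
    Continuous (fun θ : ℝ => Complex.exp (θ * I) / (Complex.exp (θ * I) - z)) := by
  have hc : Continuous (fun θ : ℝ => Complex.exp (θ * I)) :=
    Complex.continuous_exp.comp (Complex.continuous_ofReal.mul continuous_const)
  exact hc.div (hc.sub continuous_const) (fun θ => expθ_ne hz θ)

lemma integral_pk_interval {z : ℂ} (hz : ‖z‖ < 1) :
    ∫ θ in (0:ℝ)..(2*π), pk z θ = 2 * π := by
  have hg : ∀ θ : ℝ, ((2 * (Complex.exp (θ * I) / (Complex.exp (θ * I) - z)) - 1 : ℂ)).re
      = pk z θ := by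
    intro θ
    rw [pk_re z θ]
    congr 1
    have hne := expθ_ne hz θ
    field_simp
    ring
  have hint : IntervalIntegrable
      (fun θ : ℝ => (2 * (Complex.exp (θ * I) / (Complex.exp (θ * I) - z)) - 1 : ℂ))
      volume 0 (2*π) :=
    ((continuous_const.mul (cont_exp_sub hz)).sub continuous_const).intervalIntegrable _ _
  have key : ∫ θ in (0:ℝ)..(2*π),
      ((2 * (Complex.exp (θ * I) / (Complex.exp (θ * I) - z)) - 1 : ℂ)).re
      = ((∫ θ in (0:ℝ)..(2*π),
        (2 * (Complex.exp (θ * I) / (Complex.exp (θ * I) - z)) - 1 : ℂ)).re) :=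
    by simpa using (ContinuousLinearMap.intervalIntegral_comp_comm Complex.reCLM hint)
  calc ∫ θ in (0:ℝ)..(2*π), pk z θ
      = ∫ θ in (0:ℝ)..(2*π),
        ((2 * (Complex.exp (θ * I) / (Complex.exp (θ * I) - z)) - 1 : ℂ)).re := by
        simp only [hg]
    _ = ((∫ θ in (0:ℝ)..(2*π),
        (2 * (Complex.exp (θ * I) / (Complex.exp (θ * I) - z)) - 1 : ℂ)).re) := key
    _ = 2 * π := by
        rw [intervalIntegral.integral_sub
          (f := fun θ : ℝ => 2 * (Complex.exp (θ * I) / (Complex.exp (θ * I) - z)))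
          (g := fun _ => (1:ℂ))
          ((continuous_const.mul (cont_exp_sub hz)).intervalIntegrable _ _)
          (intervalIntegrable_const), intervalIntegral.integral_const_mul,
          integral_exp_div hz]
        simp
        ring

lemma pk_nonneg {z : ℂ} (hz : ‖z‖ < 1) (θ : ℝ) : 0 ≤ pk z θ := by
  apply div_nonneg _ (sq_nonneg _)
  nlinarith [norm_nonneg z]

lemma pk_bound {z : ℂ} (hz : ‖z‖ < 1) (θ : ℝ) :
    pk z θ ≤ (1 - ‖z‖ ^ 2) / (1 - ‖z‖) ^ 2 := by
  have h1 : 1 - ‖z‖ ≤ ‖Complex.exp (θ * I) - z‖ := by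
    have := norm_sub_norm_le (Complex.exp (θ * I)) z
    simp only [Complex.norm_exp_ofReal_mul_I] at this
    exact this
  have h2 : (0:ℝ) < 1 - ‖z‖ := by linarith
  rw [pk]
  gcongr (1 - ‖z‖ ^ 2) / ?_
  · nlinarith [norm_nonneg z]
  · exact pow_le_pow_left₀ h2.le h1 2

lemma pk_cont {z : ℂ} (hz : ‖z‖ < 1) : Continuous (pk z) := by
  have hc : Continuous (fun θ : ℝ => Complex.exp (θ * I)) :=
    Complex.continuous_exp.comp (Complex.continuous_ofReal.mul continuous_const)
  apply continuous_const.div ((continuous_norm.comp (hc.sub continuous_const)).pow 2)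
  intro θ
  exact pow_ne_zero 2 (norm_ne_zero_iff.mpr (expθ_ne hz θ))

lemma integral_pk {z : ℂ} (hz : ‖z‖ < 1) : ∫ θ, pk z θ ∂circleM = 1 := by
  rw [integral_circleM, integral_pk_interval hz]
  field_simp

lemma integrable_pk {z : ℂ} (hz : ‖z‖ < 1) : Integrable (pk z) circleM := by
  apply (integrable_const ((1 - ‖z‖ ^ 2) / (1 - ‖z‖) ^ 2)).mono'
    (pk_cont hz).aestronglyMeasurable
  filter_upwards with θ
  rw [Real.norm_eq_abs, _root_.abs_of_nonneg (pk_nonneg hz θ)]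
  exact pk_bound hz θ

lemma integrable_pk_mul {z : ℂ} (hz : ‖z‖ < 1) {u : ℝ → ℝ}
    (hu : Integrable u circleM) : Integrable (fun θ => pk z θ * u θ) circleM :=
  hu.bdd_mul (pk_cont hz).aestronglyMeasurable
    (Eventually.of_forall (fun θ => show ‖pk z θ‖ ≤ (1 - ‖z‖ ^ 2) / (1 - ‖z‖) ^ 2 by
      rw [Real.norm_eq_abs, _root_.abs_of_nonneg (pk_nonneg hz θ)]; exact pk_bound hz θ))

lemma mem_unitDisk_iff {z : ℂ} : z ∈ unitDisk ↔ ‖z‖ < 1 := by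
  simp [unitDisk, Metric.mem_ball, Complex.dist_eq]

/-- Let η ≥ 0 with ‖η‖_∞ = 1 and log η ∈ L¹, and let O_η be the
associated outer function (with boundary modulus η and
|O_η(z)| = exp(P(log η)(z)) on 𝔻). Then O_η is G-extremal (‖O_η‖_G = 1) iff
there is a sequence {z_n} ⊂ 𝔻 with Pη(z_n) → 1 and P(log(1/η))(z_n) → ∞. -/
theorem G_extremal_outer_characterization
    (η : ℝ → ℝ) (hη : ∀ θ, 0 ≤ η θ)
    (hηinf : MemLp η ⊤ circleM) (hηnorm : eLpNorm η ⊤ circleM = 1)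
    (hlog : Integrable (fun θ => Real.log (η θ)) circleM)
    (Ob : ℝ → ℂ)
    (hOmod : ∀ᵐ θ ∂circleM, ‖Ob θ‖ = η θ)
    (hOrec : ∀ z ∈ unitDisk, ‖poissonInt Ob z‖ =
      Real.exp (poissonIntR (fun θ => Real.log (η θ)) z)) :
    garsiaNorm Ob = 1 ↔
      ∃ zs : ℕ → ℂ, (∀ n, zs n ∈ unitDisk) ∧
        Tendsto (fun n => poissonIntR η (zs n)) atTop (nhds 1) ∧
        Tendsto (fun n => poissonIntR (fun θ => Real.log (1 / η θ)) (zs n))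
          atTop atTop := by
  have hη1 : ∀ᵐ θ ∂circleM, η θ ≤ 1 := by
    have h := ae_le_eLpNormEssSup (f := η) (μ := circleM)
    rw [← eLpNorm_exponent_top, hηnorm] at h
    filter_upwards [h] with θ hθ
    have h2 : ‖η θ‖ ≤ 1 := by
      have h1 : ‖η θ‖₊ ≤ (1 : NNReal) := ENNReal.coe_le_one_iff.mp hθ
      exact_mod_cast h1
    calc η θ ≤ |η θ| := le_abs_self _
      _ ≤ 1 := by rwa [Real.norm_eq_abs] at h2
  have hinv : ∀ w : ℂ, poissonIntR (fun θ => Real.log (1 / η θ)) w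
      = - poissonIntR (fun θ => Real.log (η θ)) w := by
    intro w
    rw [poissonIntR, poissonIntR, ← integral_neg]
    congr 1; funext θ
    rw [one_div, Real.log_inv]; ring
  have main : ∀ z ∈ unitDisk,
      Phi Ob z = (∫ θ, pk z θ * η θ ^ 2 ∂circleM)
          - Real.exp (poissonIntR (fun θ => Real.log (η θ)) z) ^ 2 ∧
      (∫ θ, pk z θ * η θ ^ 2 ∂circleM) ≤ poissonIntR η z ∧
      poissonIntR η z ≤ 1 ∧
      2 * poissonIntR η z - 1 ≤ ∫ θ, pk z θ * η θ ^ 2 ∂circleM := by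
    intro z hzD
    have hz : ‖z‖ < 1 := mem_unitDisk_iff.mp hzD
    have iη : Integrable η circleM := by
      apply (integrable_const (1:ℝ)).mono' hηinf.aestronglyMeasurable
      filter_upwards [hη1] with θ h1
      rw [Real.norm_eq_abs, _root_.abs_of_nonneg (hη θ)]; exact h1
    have ipk := integrable_pk hz
    have ipkη : Integrable (fun θ => pk z θ * η θ) circleM := integrable_pk_mul hz iη
    have iη2 : Integrable (fun θ => η θ * η θ) circleM := by
      apply iη.mono' (hηinf.aestronglyMeasurable.mul hηinf.aestronglyMeasurable)
      filter_upwards [hη1] with θ h1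
      show |η θ * η θ| ≤ η θ
      rw [_root_.abs_of_nonneg (mul_nonneg (hη θ) (hη θ))]
      nlinarith [hη θ]
    have ipkη2 : Integrable (fun θ => pk z θ * η θ ^ 2) circleM := by
      have h := integrable_pk_mul hz iη2
      simpa [sq] using h
    have hPhi : Phi Ob z = (∫ θ, pk z θ * η θ ^ 2 ∂circleM)
        - Real.exp (poissonIntR (fun θ => Real.log (η θ)) z) ^ 2 := by
      rw [Phi, hOrec z hzD]
      congr 1
      apply integral_congr_ae
      filter_upwards [hOmod] with θ hθ
      rw [hθ]
    have hQP : (∫ θ, pk z θ * η θ ^ 2 ∂circleM) ≤ poissonIntR η z := by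
      rw [poissonIntR]
      apply integral_mono_ae ipkη2 ipkη
      filter_upwards [hη1] with θ h1
      nlinarith [mul_nonneg (pk_nonneg hz θ) (mul_nonneg (hη θ) (sub_nonneg.mpr h1))]
    have hP1 : poissonIntR η z ≤ 1 := by
      rw [poissonIntR, ← integral_pk hz]
      apply integral_mono_ae ipkη ipk
      filter_upwards [hη1] with θ h1
      nlinarith [pk_nonneg hz θ]
    have hlow : 2 * poissonIntR η z - 1 ≤ ∫ θ, pk z θ * η θ ^ 2 ∂circleM := by
      have h2 : ∫ θ, (2 * (pk z θ * η θ) - pk z θ) ∂circleM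
          = 2 * poissonIntR η z - 1 := by
        rw [integral_sub (ipkη.const_mul 2) ipk, integral_const_mul, integral_pk hz,
          poissonIntR]
      rw [← h2]
      apply integral_mono_ae ((ipkη.const_mul 2).sub ipk) ipkη2
      filter_upwards with θ
      show 2 * (pk z θ * η θ) - pk z θ ≤ pk z θ * η θ ^ 2
      nlinarith [mul_nonneg (pk_nonneg hz θ) (sq_nonneg (η θ - 1))]
    exact ⟨hPhi, hQP, hP1, hlow⟩
  constructor
  · intro hG
    have hex : ∀ n : ℕ, ∃ z : unitDisk,
        ENNReal.ofReal (1 - 1/(n+1)) < ENNReal.ofReal (Real.sqrt (Phi Ob (z:ℂ))) := by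
      intro n
      have h1 : ENNReal.ofReal (1 - 1/(n+1)) < garsiaNorm Ob := by
        rw [hG]
        refine ENNReal.ofReal_lt_one.mpr ?_
        have h0 : (0:ℝ) < 1/(n+1) := by positivity
        linarith
      rw [garsiaNorm] at h1
      exact lt_iSup_iff.mp h1
    choose zs hzs using hex
    have h0 : ∀ n : ℕ, (0:ℝ) ≤ 1 - 1/(n+1) := by
      intro n
      have h1 : (1:ℝ) ≤ (n:ℝ) + 1 := by
        have := (Nat.cast_nonneg n : (0:ℝ) ≤ n); linarith
      have : 1/((n:ℝ)+1) ≤ 1 := by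
        rw [div_le_one (by positivity)]; exact h1
      linarith
    have hsq : ∀ n : ℕ, (1 - 1/(n+1:ℝ))^2 < Phi Ob ((zs n : ℂ)) := by
      intro n
      have h2 := (ENNReal.ofReal_lt_ofReal_iff_of_nonneg (h0 n)).mp (hzs n)
      exact (Real.lt_sqrt (h0 n)).mp h2
    have hc : Tendsto (fun n : ℕ => (1 - 1/(n+1:ℝ))^2) atTop (nhds 1) := by
      have h1 : Tendsto (fun n : ℕ => 1 - 1/(n+1:ℝ)) atTop (nhds 1) := by
        have h : Tendsto (fun n : ℕ => 1 / ((n : ℝ) + 1)) atTop (nhds 0) :=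
          tendsto_one_div_add_atTop_nhds_zero_nat
        simpa using (tendsto_const_nhds (x := (1:ℝ)) (f := atTop)).sub h
      simpa using h1.pow 2
    have hPhiT : Tendsto (fun n => Phi Ob ((zs n : ℂ))) atTop (nhds 1) := by
      apply tendsto_of_tendsto_of_tendsto_of_le_of_le hc tendsto_const_nhds
        (fun n => (hsq n).le) (fun n => ?_)
      obtain ⟨h1, h2, h3, _⟩ := main _ (zs n).prop
      have := Real.exp_pos (poissonIntR (fun θ => Real.log (η θ)) ((zs n : ℂ)))
      nlinarith
    have hPT : Tendsto (fun n => poissonIntR η ((zs n : ℂ))) atTop (nhds 1) := by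
      apply tendsto_of_tendsto_of_tendsto_of_le_of_le hPhiT tendsto_const_nhds
        (fun n => ?_) (fun n => (main _ (zs n).prop).2.2.1)
      obtain ⟨h1, h2, h3, _⟩ := main _ (zs n).prop
      have := Real.exp_pos (poissonIntR (fun θ => Real.log (η θ)) ((zs n : ℂ)))
      nlinarith
    have hET : Tendsto
        (fun n => Real.exp (poissonIntR (fun θ => Real.log (η θ)) ((zs n : ℂ))) ^ 2)
        atTop (nhds 0) := by
      have hupper : Tendsto (fun n => 1 - Phi Ob ((zs n : ℂ))) atTop (nhds 0) := by
        simpa using (tendsto_const_nhds (x := (1:ℝ)) (f := atTop)).sub hPhiT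
      apply tendsto_of_tendsto_of_tendsto_of_le_of_le tendsto_const_nhds hupper
        (fun n => sq_nonneg _) (fun n => ?_)
      obtain ⟨h1, h2, h3, _⟩ := main _ (zs n).prop
      linarith
    have hexp : Tendsto
        (fun n => Real.exp (poissonIntR (fun θ => Real.log (η θ)) ((zs n : ℂ))))
        atTop (nhds 0) := by
      have h2 : Tendsto (fun n => Real.sqrt
          (Real.exp (poissonIntR (fun θ => Real.log (η θ)) ((zs n : ℂ))) ^ 2))
          atTop (nhds 0) := by
        simpa [Function.comp_def] using (Real.continuous_sqrt.tendsto 0).comp hET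
      have h3 : ∀ n, Real.sqrt
          (Real.exp (poissonIntR (fun θ => Real.log (η θ)) ((zs n : ℂ))) ^ 2)
          = Real.exp (poissonIntR (fun θ => Real.log (η θ)) ((zs n : ℂ))) :=
        fun n => Real.sqrt_sq (Real.exp_nonneg _)
      simpa only [h3] using h2
    have hbot : Tendsto (fun n => poissonIntR (fun θ => Real.log (η θ)) ((zs n : ℂ)))
        atTop atBot := Real.tendsto_exp_comp_nhds_zero.mp hexp
    refine ⟨fun n => (zs n : ℂ), fun n => (zs n).prop, hPT, ?_⟩
    simp only [hinv]
    exact tendsto_neg_atTop_iff.mpr hbot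
  · rintro ⟨zs, hzsD, hP, hLinf⟩
    have hbot : Tendsto (fun n => poissonIntR (fun θ => Real.log (η θ)) (zs n))
        atTop atBot := by
      simp only [hinv] at hLinf
      exact tendsto_neg_atTop_iff.mp hLinf
    have hET : Tendsto
        (fun n => Real.exp (poissonIntR (fun θ => Real.log (η θ)) (zs n)) ^ 2)
        atTop (nhds 0) := by
      have h := Real.tendsto_exp_atBot.comp hbot
      simpa using h.pow 2
    have hPhiT : Tendsto (fun n => Phi Ob (zs n)) atTop (nhds 1) := by
      have hlowT : Tendsto (fun n => 2 * poissonIntR η (zs n) - 1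
          - Real.exp (poissonIntR (fun θ => Real.log (η θ)) (zs n)) ^ 2)
          atTop (nhds 1) := by
        have h := ((hP.const_mul 2).sub
          (tendsto_const_nhds (x := (1:ℝ)) (f := atTop))).sub hET
        convert h using 2
        norm_num
      apply tendsto_of_tendsto_of_tendsto_of_le_of_le hlowT tendsto_const_nhds
        (fun n => ?_) (fun n => ?_)
      · obtain ⟨h1, h2, h3, h4⟩ := main _ (hzsD n)
        linarith
      · obtain ⟨h1, h2, h3, h4⟩ := main _ (hzsD n)
        have := Real.exp_pos (poissonIntR (fun θ => Real.log (η θ)) (zs n))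
        nlinarith
    have hsqrtT : Tendsto (fun n => Real.sqrt (Phi Ob (zs n))) atTop (nhds 1) := by
      have h := (Real.continuous_sqrt.tendsto 1).comp hPhiT
      simpa [Function.comp_def] using h
    apply le_antisymm
    · rw [garsiaNorm]
      apply iSup_le
      intro z
      rw [ENNReal.ofReal_le_one]
      apply Real.sqrt_le_one.mpr
      obtain ⟨h1, h2, h3, _⟩ := main _ z.prop
      have := Real.exp_pos (poissonIntR (fun θ => Real.log (η θ)) (z:ℂ))
      nlinarith
    · have hle : ∀ n, ENNReal.ofReal (Real.sqrt (Phi Ob (zs n))) ≤ garsiaNorm Ob := by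
        intro n
        exact le_iSup (fun z : unitDisk => ENNReal.ofReal (Real.sqrt (Phi Ob (z:ℂ))))
          (⟨zs n, hzsD n⟩ : unitDisk)
      have hT : Tendsto (fun n => ENNReal.ofReal (Real.sqrt (Phi Ob (zs n))))
          atTop (nhds 1) := by
        simpa using ENNReal.tendsto_ofReal hsqrtT
      exact le_of_tendsto hT (Eventually.of_forall hle)
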